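/- arXiv:1807.03422 — 3 statements merged into one kernel-verified Lean document; each statement's English description precedes it below -/
import Mathlib

section
/- Let X1, X2, Y1, Y2 be finite sets and P_{Y1,Y2|X1,X2} a channel from X1 × X2 to Y1 × Y2. Assume: (i) there exists a distribution P* on X1 such that for every x2 ∈ X2, P* maximizes P ↦ I(P, P_{Y2|X1,X2}(·|·,x2)) over all distributions P on X1; (ii) for every distribution Q on X2, the value I(Q, P_{Y1|X1,X2}(·|x1,·)) does not depend on x1 ∈ X1. Then for every joint input distribution P^{(1)} on X1 × X2 with X2-marginal P^{(1)}_{X2}, the product distribution P^{(2)} = P* ⊗ P^{(1)}_{X2} satisfies I^{(1)}(X1; Y2 | X2) ≤ I^{(2)}(X1; Y2 | X2) and I^{(1)}(X2; Y1 | X1) ≤ I^{(2)}(X2; Y1 | X1). -/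
/-- A probability distribution on a finite set: nonnegative and sums to 1. -/
def IsProb {S : Type*} [Fintype S] (p : S → ℝ) : Prop :=
  (∀ s, 0 ≤ p s) ∧ ∑ s, p s = 1

/-- Input–output mutual information `I(P_X, P_{Y|X})` of a channel `W` under input `P`. -/
noncomputable def mutInf {X Y : Type*} [Fintype X] [Fintype Y]
    (P : X → ℝ) (W : X → Y → ℝ) : ℝ :=
  ∑ x, ∑ y, P x * W x y * Real.log (W x y / ∑ x', P x' * W x' y)

/-- Conditional distribution of the first coordinate given the second, for a joint
distribution `P` on `X1 × X2`; defined (arbitrarily) to be uniform when the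
conditioning event has zero probability. -/
noncomputable def condDist {X1 X2 : Type*} [Fintype X1] [Fintype X2]
    (P : X1 × X2 → ℝ) (x2 : X2) (x1 : X1) : ℝ :=
  if (∑ a, P (a, x2)) = 0 then (Fintype.card X1 : ℝ)⁻¹
  else P (x1, x2) / ∑ a, P (a, x2)

/-- Conditional mutual information `I(X1; Y | X2)` of the channel
`W : X1 → X2 → Y → ℝ` under joint input distribution `P` on `X1 × X2`:
`∑_{x2} P_{X2}(x2) · I(P_{X1|X2=x2}, W(·|·,x2))`. -/
noncomputable def condMI {X1 X2 Y : Type*} [Fintype X1] [Fintype X2] [Fintype Y]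
    (P : X1 × X2 → ℝ) (W : X1 → X2 → Y → ℝ) : ℝ :=
  ∑ x2, (∑ a, P (a, x2)) * mutInf (condDist P x2) (fun x1 y => W x1 x2 y)

lemma mutInf_decomp {X Y : Type*} [Fintype X] [Fintype Y] (P : X → ℝ) (W : X → Y → ℝ)
    (hP : ∀ x, 0 ≤ P x) (hW : ∀ x y, 0 ≤ W x y) :
    mutInf P W = (∑ y, ∑ x, P x * W x y * Real.log (W x y))
      - ∑ y, (∑ x, P x * W x y) * Real.log (∑ x, P x * W x y) := by
  unfold mutInf
  rw [Finset.sum_comm, ← Finset.sum_sub_distrib]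
  refine Finset.sum_congr rfl fun y _ => ?_
  rw [Finset.sum_mul, ← Finset.sum_sub_distrib]
  refine Finset.sum_congr rfl fun x _ => ?_
  by_cases h : P x * W x y = 0
  · simp [h]
  · have hw : W x y ≠ 0 := fun hw => h (by simp [hw])
    have hpw : 0 < P x * W x y := lt_of_le_of_ne (mul_nonneg (hP x) (hW x y)) (Ne.symm h)
    have hq : 0 < ∑ x', P x' * W x' y :=
      lt_of_lt_of_le hpw (Finset.single_le_sum (fun x' _ => mul_nonneg (hP x') (hW x' y))
        (Finset.mem_univ x))
    rw [Real.log_div hw hq.ne', mul_sub]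

lemma mutInf_concave {ι X Y : Type*} [Fintype ι] [Fintype X] [Fintype Y]
    (a : ι → ℝ) (ha : ∀ i, 0 ≤ a i) (ha1 : ∑ i, a i = 1)
    (P : ι → X → ℝ) (hP : ∀ i x, 0 ≤ P i x)
    (W : X → Y → ℝ) (hW : ∀ x y, 0 ≤ W x y) :
    ∑ i, a i * mutInf (P i) W ≤ mutInf (fun x => ∑ i, a i * P i x) W := by
  have hPc : ∀ x, 0 ≤ ∑ i, a i * P i x := fun x =>
    Finset.sum_nonneg fun i _ => mul_nonneg (ha i) (hP i x)
  rw [mutInf_decomp _ _ hPc hW]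
  simp_rw [mutInf_decomp (P _) W (hP _) hW, mul_sub, Finset.sum_sub_distrib]
  have hq : ∀ y, (∑ x, (∑ i, a i * P i x) * W x y) = ∑ i, a i * ∑ x, P i x * W x y := by
    intro y
    have e : ∀ x, (∑ i, a i * P i x) * W x y = ∑ i, a i * (P i x * W x y) := fun x => by
      rw [Finset.sum_mul]; exact Finset.sum_congr rfl fun i _ => by ring
    simp_rw [e]
    rw [Finset.sum_comm]
    exact Finset.sum_congr rfl fun i _ => (Finset.mul_sum _ _ _).symm
  have hA : (∑ y, ∑ x, (∑ i, a i * P i x) * W x y * Real.log (W x y))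
      = ∑ i, a i * ∑ y, ∑ x, P i x * W x y * Real.log (W x y) := by
    have e1 : ∀ y, (∑ x, (∑ i, a i * P i x) * W x y * Real.log (W x y))
        = ∑ i, ∑ x, a i * (P i x * W x y * Real.log (W x y)):= by
      intro y
      rw [Finset.sum_comm]
      refine Finset.sum_congr rfl fun x _ => ?_
      rw [Finset.sum_mul, Finset.sum_mul]
      exact Finset.sum_congr rfl fun i _ => by ring
    simp_rw [e1]
    rw [Finset.sum_comm]
    refine Finset.sum_congr rfl fun i _ => ?_
    rw [Finset.mul_sum]
    exact Finset.sum_congr rfl fun y _ => (Finset.mul_sum _ _ _).symm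
  have hB : (∑ y, (∑ x, (∑ i, a i * P i x) * W x y) * Real.log (∑ x, (∑ i, a i * P i x) * W x y))
      ≤ ∑ i, a i * ∑ y, (∑ x, P i x * W x y) * Real.log (∑ x, P i x * W x y) := by
    have e2 : (∑ i, a i * ∑ y, (∑ x, P i x * W x y) * Real.log (∑ x, P i x * W x y))
        = ∑ y, ∑ i, a i * ((∑ x, P i x * W x y) * Real.log (∑ x, P i x * W x y)) := by
      rw [Finset.sum_comm]
      exact Finset.sum_congr rfl fun i _ => Finset.mul_sum _ _ _
    rw [e2]
    refine Finset.sum_le_sum fun y _ => ?_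
    rw [hq y]
    have := Real.convexOn_mul_log.map_sum_le (t := Finset.univ)
      (w := a) (p := fun i => ∑ x, P i x * W x y) (fun i _ => ha i) ha1
      (fun i _ => Finset.sum_nonneg fun x _ => mul_nonneg (hP i x) (hW x y))
    simpa [smul_eq_mul] using this
  linarith [hA, hB]

lemma isProb_condDist {X1 X2 : Type*} [Fintype X1] [Fintype X2] [Nonempty X1]
    (P : X1 × X2 → ℝ) (hP : ∀ p, 0 ≤ P p) (x2 : X2) : IsProb (condDist P x2) := by
  by_cases h : (∑ a, P (a, x2)) = 0
  · refine ⟨fun x1 => by simp [condDist, h], ?_⟩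
    simp only [condDist, h, if_true, Finset.sum_const, Finset.card_univ, nsmul_eq_mul]
    rw [mul_inv_cancel₀]
    exact Nat.cast_ne_zero.mpr Fintype.card_ne_zero
  · have hpos : 0 < ∑ a, P (a, x2) :=
      lt_of_le_of_ne (Finset.sum_nonneg fun a _ => hP _) (Ne.symm h)
    refine ⟨fun x1 => by simp only [condDist, h, if_false]; exact div_nonneg (hP _) hpos.le, ?_⟩
    simp only [condDist, h, if_false]
    rw [← Finset.sum_div, div_self h]

/-- if (i) a common capacity-achieving input distribution `P*` exists
for the one-way channels from user 1 to user 2 (one for each state `x2`), and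
(ii) the input-output mutual information of the reverse one-way channels does not
depend on the state `x1`, then for any joint input distribution the product
distribution `P* ⊗ P_{X2}` dominates both conditional mutual informations. -/
theorem product_dominance_of_common_maximizer_and_invariance
    {X1 X2 Y1 Y2 : Type*} [Fintype X1] [Fintype X2] [Fintype Y1] [Fintype Y2]
    (W : X1 → X2 → Y1 × Y2 → ℝ) (hW : ∀ x1 x2, IsProb (W x1 x2))
    (Pstar : X1 → ℝ) (hPstar : IsProb Pstar)
    (hmax : ∀ (x2 : X2) (P : X1 → ℝ), IsProb P →
      mutInf P (fun x1 y2 => ∑ y1, W x1 x2 (y1, y2)) ≤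
        mutInf Pstar (fun x1 y2 => ∑ y1, W x1 x2 (y1, y2)))
    (hinv : ∀ (Q : X2 → ℝ), IsProb Q → ∀ x1 x1' : X1,
      mutInf Q (fun x2 y1 => ∑ y2, W x1 x2 (y1, y2)) =
        mutInf Q (fun x2 y1 => ∑ y2, W x1' x2 (y1, y2)))
    (P1 : X1 × X2 → ℝ) (hP1 : IsProb P1) :
    condMI P1 (fun x1 x2 y2 => ∑ y1, W x1 x2 (y1, y2)) ≤
      condMI (fun p => Pstar p.1 * ∑ a, P1 (a, p.2))
        (fun x1 x2 y2 => ∑ y1, W x1 x2 (y1, y2)) ∧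
    condMI (fun p : X2 × X1 => P1 (p.2, p.1))
        (fun x2 x1 y1 => ∑ y2, W x1 x2 (y1, y2)) ≤
      condMI (fun p : X2 × X1 => Pstar p.2 * ∑ a, P1 (a, p.1))
        (fun x2 x1 y1 => ∑ y2, W x1 x2 (y1, y2)) := by
  have hne : Nonempty (X1 × X2) := by
    by_contra h
    rw [not_nonempty_iff] at h
    have := hP1.2
    rw [Finset.univ_eq_empty, Finset.sum_empty] at this
    norm_num at this
  have hne1 : Nonempty X1 := ⟨(Classical.arbitrary (X1 × X2)).1⟩
  have hne2 : Nonempty X2 := ⟨(Classical.arbitrary (X1 × X2)).2⟩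
  have hmtot : ∑ x2 : X2, ∑ a : X1, P1 (a, x2) = 1 := by
    rw [← hP1.2, Fintype.sum_prod_type, Finset.sum_comm]
  have hntot : ∑ x1 : X1, ∑ a : X2, P1 (x1, a) = 1 := by
    rw [← hP1.2, Fintype.sum_prod_type]
  have hmprob : IsProb (fun x2 : X2 => ∑ a : X1, P1 (a, x2)) :=
    ⟨fun x2 => Finset.sum_nonneg fun a _ => hP1.1 _, hmtot⟩
  constructor
  · -- first inequality
    unfold condMI
    refine Finset.sum_le_sum fun x2 _ => ?_
    simp only
    have hmarg : (∑ a : X1, Pstar a * ∑ b : X1, P1 (b, x2)) = ∑ b : X1, P1 (b, x2) := by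
      rw [← Finset.sum_mul, hPstar.2, one_mul]
    rw [hmarg]
    by_cases h0 : (∑ b : X1, P1 (b, x2)) = 0
    · rw [h0]; simp
    · refine mul_le_mul_of_nonneg_left ?_ (hmprob.1 x2)
      have hcd : condDist (fun p : X1 × X2 => Pstar p.1 * ∑ a, P1 (a, p.2)) x2 = Pstar := by
        funext x1
        simp only [condDist, hmarg, h0, if_false]
        rw [mul_div_assoc, div_self h0, mul_one]
      rw [hcd]
      exact hmax x2 _ (isProb_condDist P1 hP1.1 x2)
  · -- second inequality
    obtain ⟨x0⟩ := hne1
    unfold condMI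
    simp only
    -- RHS equals c
    have hrcoef : ∀ x1 : X1, (∑ a : X2, Pstar x1 * ∑ b : X1, P1 (b, a)) = Pstar x1 := by
      intro x1
      rw [← Finset.mul_sum, hmtot, mul_one]
    have hVnn : ∀ (x1 : X1) (x2 : X2) (y1 : Y1), 0 ≤ ∑ y2, W x1 x2 (y1, y2) :=
      fun x1 x2 y1 => Finset.sum_nonneg fun y2 _ => (hW x1 x2).1 _
    set c : ℝ := mutInf (fun x2 : X2 => ∑ a : X1, P1 (a, x2))
      (fun x2 y1 => ∑ y2, W x0 x2 (y1, y2)) with hc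
    have hrhs : (∑ x1 : X1, (∑ a : X2, Pstar x1 * ∑ b : X1, P1 (b, a)) *
        mutInf (condDist (fun p : X2 × X1 => Pstar p.2 * ∑ a, P1 (a, p.1)) x1)
          (fun x2 y1 => ∑ y2, W x1 x2 (y1, y2))) = c := by
      have : ∀ x1 : X1, (∑ a : X2, Pstar x1 * ∑ b : X1, P1 (b, a)) *
          mutInf (condDist (fun p : X2 × X1 => Pstar p.2 * ∑ a, P1 (a, p.1)) x1)
            (fun x2 y1 => ∑ y2, W x1 x2 (y1, y2)) = Pstar x1 * c := by
        intro x1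
        rw [hrcoef]
        by_cases hp : Pstar x1 = 0
        · rw [hp, zero_mul, zero_mul]
        · congr 1
          have hcd : condDist (fun p : X2 × X1 => Pstar p.2 * ∑ a, P1 (a, p.1)) x1
              = fun x2 : X2 => ∑ a : X1, P1 (a, x2) := by
            funext x2
            simp only [condDist, hrcoef, hp, if_false]
            rw [mul_comm, mul_div_assoc, div_self hp, mul_one]
          rw [hcd, hc]
          exact hinv _ hmprob x1 x0
      rw [Finset.sum_congr rfl fun x1 _ => this x1, ← Finset.sum_mul, hPstar.2, one_mul]
    rw [hrhs]
    -- LHS ≤ c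
    have hQprob : ∀ x1 : X1, IsProb (condDist (fun p : X2 × X1 => P1 (p.2, p.1)) x1) :=
      fun x1 => isProb_condDist _ (fun p => hP1.1 _) x1
    calc (∑ x1 : X1, (∑ a : X2, P1 (x1, a)) *
          mutInf (condDist (fun p : X2 × X1 => P1 (p.2, p.1)) x1)
            (fun x2 y1 => ∑ y2, W x1 x2 (y1, y2)))
        = ∑ x1 : X1, (∑ a : X2, P1 (x1, a)) *
          mutInf (condDist (fun p : X2 × X1 => P1 (p.2, p.1)) x1)
            (fun x2 y1 => ∑ y2, W x0 x2 (y1, y2)) := by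
          refine Finset.sum_congr rfl fun x1 _ => ?_
          rw [hinv _ (hQprob x1) x1 x0]
      _ ≤ mutInf (fun x2 => ∑ x1 : X1, (∑ a : X2, P1 (x1, a)) *
            condDist (fun p : X2 × X1 => P1 (p.2, p.1)) x1 x2)
            (fun x2 y1 => ∑ y2, W x0 x2 (y1, y2)) :=
          mutInf_concave _ (fun x1 => Finset.sum_nonneg fun a _ => hP1.1 _) hntot
            _ (fun x1 x2 => (hQprob x1).1 x2) _ (fun x2 y1 => hVnn x0 x2 y1)
      _ = c := by
          rw [hc]
          congr 1
          funext x2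
          refine Finset.sum_congr rfl fun x1 _ => ?_
          by_cases h0 : (∑ a : X2, P1 (x1, a)) = 0
          · have hz : P1 (x1, x2) = 0 := le_antisymm (h0 ▸
              Finset.single_le_sum (f := fun a => P1 (x1, a))
                (fun a _ => hP1.1 _) (Finset.mem_univ x2)) (hP1.1 _)
            rw [h0, hz, zero_mul]
          · simp only [condDist]
            rw [if_neg h0, mul_comm, div_mul_cancel₀ _ h0]
end

section
/- Let X1, X2, Z, Y be finite sets with |X1| = |Y| = |Z| = q, and let F : X1 × X2 × Z → Y be a function such that for every fixed (x1, x2), the map z ↦ F(x1, x2, z) is a bijection, and for every fixed (x2, y), the map x1 ↦ F^{-1}(x1, x2, y) (the unique z with F(x1,x2,z) = y) is a bijection from X1 to Z. Let Z be a random variable on Z with arbitrary distribution, let X1 be uniform on X1 and independent of (X2, Z), where X2 and Z are independent. Define Y = F(X1, X2, Z). Then for every x2 ∈ X2, the conditional distribution of Y given X2 = x2 is uniform on Y. -/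
/-- if `F(x1, x2, ·)` is a bijection in the noise for every fixed
input pair, and the inverse map `x1 ↦ F⁻¹(x1, x2, y)` is a bijection from `X1`
to `Z` for every fixed `(x2, y)`, with `|X1| = |Y| = |Z| = q`, then under a
uniform input `X1` independent of `(X2, Z)` (with `X2 ⟂ Z`), the conditional
distribution of `Y = F(X1, X2, Z)` given `X2 = x2` is uniform on `Y`. -/
theorem output_uniform_of_invertible_channel
    {X1 X2 Z Y : Type*} [Fintype X1] [Fintype X2] [Fintype Z] [Fintype Y]
    [DecidableEq Y]
    (q : ℕ) (hq : 0 < q)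
    (hcard1 : Fintype.card X1 = q) (hcardY : Fintype.card Y = q)
    (hcardZ : Fintype.card Z = q)
    (F : X1 → X2 → Z → Y) (hF : ∀ x1 x2, Function.Bijective (F x1 x2))
    (G : X1 → X2 → Y → Z)
    (hG : ∀ x1 x2 z, G x1 x2 (F x1 x2 z) = z)
    (hGbij : ∀ (x2 : X2) (y : Y), Function.Bijective (fun x1 => G x1 x2 y))
    (μZ : Z → ℝ) (hμZ : IsProb μZ) :
    ∀ (x2 : X2) (y : Y),
      ∑ x1 : X1, ∑ z : Z,
        (q : ℝ)⁻¹ * μZ z * (if F x1 x2 z = y then 1 else 0) = (q : ℝ)⁻¹ := by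
  intro x2 y
  have hinner : ∀ x1 : X1, ∑ z : Z,
      (q : ℝ)⁻¹ * μZ z * (if F x1 x2 z = y then 1 else 0)
      = (q : ℝ)⁻¹ * μZ (G x1 x2 y) := by
    intro x1
    classical
    rw [Finset.sum_eq_single (G x1 x2 y)]
    · obtain ⟨z0, hz0⟩ := (hF x1 x2).surjective y
      subst hz0
      rw [hG, if_pos rfl, mul_one]
    · intro z _ hz
      rw [if_neg, mul_zero]
      intro h
      exact hz (by rw [← hG x1 x2 z, h])
    · intro h; exact absurd (Finset.mem_univ _) h
  simp only [hinner, ← Finset.mul_sum]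
  have : ∑ x1 : X1, μZ (G x1 x2 y) = ∑ z : Z, μZ z :=
    Fintype.sum_bijective _ (hGbij x2 y) _ _ (fun _ => rfl)
  rw [this, hμZ.2, mul_one]
end

section
/- (Shannon one-sided symmetry implies the inner-bound-achieving form.) Let X1, X2, Y1, Y2 be finite sets and P_{Y1,Y2|X1,X2} a channel. Suppose for every pair x1', x1'' ∈ X1 there exist bijections π1 on Y1 and π2 on Y2 such that P_{Y1,Y2|X1,X2}(y1,y2|x1,x2) = P_{Y1,Y2|X1,X2}(π1(y1), π2(y2) | τ_{x1',x1''}(x1), x2) for all x1,x2,y1,y2, where τ_{x1',x1''} swaps x1' and x1''. Then for every joint input distribution P on X1 × X2 with X2-marginal P_{X2}, the distribution P' = Unif(X1) ⊗ P_{X2} satisfies I_P(X1; Y2 | X2) ≤ I_{P'}(X1; Y2 | X2) and I_P(X2; Y1 | X1) ≤ I_{P'}(X2; Y1 | X1). -/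
/-!
Mutual information `I(Q, V)` is concave in the input law `Q` (it is the entropy of the output
law, a concave function of a linear image of `Q`, minus a term linear in `Q`), and it does not
change when inputs and outputs are relabelled simultaneously.

For `I(X1; Y2 | X2)`: by the symmetry, each channel `x1 ↦ Y2` at fixed `x2` is invariant under
every permutation of `X1` up to a relabelling of `Y2`. Averaging the conditional input law over
all permutations gives the uniform law, and by concavity this cannot decrease the information.

For `I(X2; Y1 | X1)`: the swap of `x1` and `x1'` shows that the channels `x2 ↦ Y1` for different
`x1` agree up to a relabelling of `Y1`. The conditional information is then an average of
informations of a single channel, which concavity bounds by its information at the marginal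
`P_{X2}`; that is exactly the value at `Unif(X1) ⊗ P_{X2}`.
-/

open Finset Real

section FiniteSums

variable {X Y₁ Y₂ Y₁' Y₂' M : Type*} [AddCommMonoid M]

theorem sum_perm_apply_eq [Fintype X] [DecidableEq X] (f : X → M) (x x' : X) :
    ∑ σ : Equiv.Perm X, f (σ x) = ∑ σ : Equiv.Perm X, f (σ x') := by
  rw [← Equiv.sum_comp (Equiv.mulRight (Equiv.swap x x'))]
  simp

theorem card_nsmul_sum_perm_apply [Fintype X] [DecidableEq X] (f : X → M) (x : X) :
    Fintype.card X • ∑ σ : Equiv.Perm X, f (σ x) =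
      Fintype.card (Equiv.Perm X) • ∑ x, f x := by
  calc Fintype.card X • ∑ σ : Equiv.Perm X, f (σ x)
      = ∑ x' : X, ∑ σ : Equiv.Perm X, f (σ x') := by simp [sum_perm_apply_eq f _ x]
    _ = ∑ σ : Equiv.Perm X, ∑ x', f (σ x') := sum_comm
    _ = _ := by simp [Equiv.sum_comp]

theorem sum_fst_eq_of_eq_prodMap [Fintype Y₁] [Fintype Y₁'] {f : Y₁ × Y₂ → M}
    {g : Y₁' × Y₂' → M} (ρ₁ : Y₁ ≃ Y₁') (ρ₂ : Y₂ → Y₂')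
    (h : ∀ y₁ y₂, f (y₁, y₂) = g (ρ₁ y₁, ρ₂ y₂)) (y₂ : Y₂) :
    ∑ y₁, f (y₁, y₂) = ∑ y₁, g (y₁, ρ₂ y₂) := by
  simp only [h]
  exact ρ₁.sum_comp fun y₁ => g (y₁, ρ₂ y₂)

theorem sum_snd_eq_of_eq_prodMap [Fintype Y₂] [Fintype Y₂'] {f : Y₁ × Y₂ → M}
    {g : Y₁' × Y₂' → M} (ρ₁ : Y₁ → Y₁') (ρ₂ : Y₂ ≃ Y₂')
    (h : ∀ y₁ y₂, f (y₁, y₂) = g (ρ₁ y₁, ρ₂ y₂)) (y₁ : Y₁) :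
    ∑ y₂, f (y₁, y₂) = ∑ y₂, g (ρ₁ y₁, y₂) := by
  simp only [h]
  exact ρ₂.sum_comp fun y₂ => g (ρ₁ y₁, y₂)

end FiniteSums

section IsProb

variable {S T : Type*} [Fintype S] [Fintype T]

theorem IsProb.nonempty {p : S → ℝ} (hp : IsProb p) : Nonempty S := by
  by_contra h
  simpa [not_nonempty_iff.1 h] using hp.2

theorem IsProb.comp_equiv {p : T → ℝ} (hp : IsProb p) (e : S ≃ T) : IsProb (p ∘ e) :=
  ⟨fun s => hp.1 (e s), (e.sum_comp p).trans hp.2⟩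

theorem IsProb.nonempty_fst {p : S × T → ℝ} (hp : IsProb p) : Nonempty S :=
  hp.nonempty.map Prod.fst

theorem IsProb.nonempty_snd {p : S × T → ℝ} (hp : IsProb p) : Nonempty T :=
  hp.nonempty.map Prod.snd

end IsProb

section InputSymmetry

variable {X Y β : Type*}

def IsInputSymmetric (V : X → Y → β) : Prop :=
  ∀ σ : Equiv.Perm X, ∃ ρ : Equiv.Perm Y, ∀ x y, V x y = V (σ x) (ρ y)

theorem IsInputSymmetric.of_swap [Finite X] [DecidableEq X] {V : X → Y → β}
    (h : ∀ a b, ∃ ρ : Equiv.Perm Y, ∀ x y, V x y = V (Equiv.swap a b x) (ρ y)) :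
    IsInputSymmetric V := by
  intro σ
  induction σ using Equiv.Perm.swap_induction_on with
  | one => exact ⟨1, fun x y => rfl⟩
  | swap_mul σ a b _ ih =>
    obtain ⟨ρ, hρ⟩ := ih
    obtain ⟨ρ', hρ'⟩ := h a b
    exact ⟨ρ' * ρ, fun x y => (hρ x y).trans (hρ' _ _)⟩

end InputSymmetry

section MutualInformation

variable {X Y : Type*} [Fintype X] [Fintype Y]

def outputDist (P : X → ℝ) (W : X → Y → ℝ) (y : Y) : ℝ :=
  ∑ x, P x * W x y

theorem mutInf_eq_sum_negMulLog_sub {P : X → ℝ} {W : X → Y → ℝ} (hP : ∀ x, 0 ≤ P x)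
    (hW : ∀ x y, 0 ≤ W x y) :
    mutInf P W =
      ∑ y, negMulLog (outputDist P W y) - ∑ x, P x * ∑ y, negMulLog (W x y) := by
  have hterm : ∀ x y, P x * W x y * log (W x y / outputDist P W y) =
      -(P x * negMulLog (W x y)) - P x * W x y * log (outputDist P W y) := by
    intro x y
    rcases (hP x).eq_or_lt with hPx | hPx
    · simp [← hPx]
    rcases (hW x y).eq_or_lt with hWx | hWx
    · simp [← hWx]
    have hq : 0 < outputDist P W y := (mul_pos hPx hWx).trans_le
      (single_le_sum (fun x' _ => mul_nonneg (hP x') (hW x' y)) (mem_univ x))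
    rw [log_div hWx.ne' hq.ne', negMulLog]
    ring
  have hout : ∑ x, ∑ y, P x * W x y * log (outputDist P W y) =
      -∑ y, negMulLog (outputDist P W y) := by
    rw [sum_comm]
    simp only [negMulLog, ← sum_mul, outputDist, neg_mul, neg_neg, sum_neg_distrib]
  change ∑ x, ∑ y, P x * W x y * log (W x y / outputDist P W y) = _
  simp only [hterm, sum_sub_distrib, sum_neg_distrib, hout, mul_sum]
  ring

theorem concaveOn_mutInf {W : X → Y → ℝ} (hW : ∀ x y, 0 ≤ W x y) :
    ConcaveOn ℝ (Set.Ici 0) fun P : X → ℝ => mutInf P W := by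
  refine ⟨convex_Ici 0, fun P hP P' hP' a b ha hb hab => ?_⟩
  have hout_nonneg : ∀ Q : X → ℝ, 0 ≤ Q → ∀ y, 0 ≤ outputDist Q W y :=
    fun Q hQ y => sum_nonneg fun x _ => mul_nonneg (hQ x) (hW x y)
  have hmix : 0 ≤ a • P + b • P' := add_nonneg (smul_nonneg ha hP) (smul_nonneg hb hP')
  have hout : ∀ y, outputDist (a • P + b • P') W y =
      a • outputDist P W y + b • outputDist P' W y := by
    intro y
    simp only [outputDist, smul_eq_mul, mul_sum, ← sum_add_distrib, Pi.add_apply, Pi.smul_apply]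
    exact sum_congr rfl fun x _ => by ring
  have hent : a • ∑ y, negMulLog (outputDist P W y) +
      b • ∑ y, negMulLog (outputDist P' W y) ≤
      ∑ y, negMulLog (outputDist (a • P + b • P') W y) := by
    simp only [smul_sum, ← sum_add_distrib, hout]
    exact sum_le_sum fun y _ => concaveOn_negMulLog.2 (hout_nonneg P hP y)
      (hout_nonneg P' hP' y) ha hb hab
  simp only [mutInf_eq_sum_negMulLog_sub hP hW, mutInf_eq_sum_negMulLog_sub hP' hW,
    mutInf_eq_sum_negMulLog_sub hmix hW, smul_eq_mul] at hent ⊢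
  simp only [Pi.add_apply, Pi.smul_apply, smul_eq_mul, add_mul, sum_add_distrib, mul_assoc,
    ← mul_sum] at hent ⊢
  linarith

theorem mutInf_comp_equiv {X' Y' : Type*} [Fintype X'] [Fintype Y'] (Q : X' → ℝ)
    {V : X → Y → ℝ} {V' : X' → Y' → ℝ} (e : X ≃ X') (ρ : Y ≃ Y')
    (h : ∀ x y, V x y = V' (e x) (ρ y)) :
    mutInf (Q ∘ e) V = mutInf Q V' := by
  have hout : ∀ y, outputDist (Q ∘ e) V y = outputDist Q V' (ρ y) := fun y => by
    simp only [outputDist, Function.comp, h]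
    exact e.sum_comp fun x => Q x * V' x (ρ y)
  change ∑ x, ∑ y, Q (e x) * V x y * log (V x y / outputDist (Q ∘ e) V y) =
    ∑ x, ∑ y, Q x * V' x y * log (V' x y / outputDist Q V' y)
  simp only [h, hout]
  rw [e.sum_comp fun x => ∑ y, Q x * V' x (ρ y) * log (V' x (ρ y) / outputDist Q V' (ρ y))]
  exact sum_congr rfl fun x _ =>
    ρ.sum_comp fun y => Q x * V' x y * log (V' x y / outputDist Q V' y)

theorem IsInputSymmetric.mutInf_comp_perm {V : X → Y → ℝ} (hV : IsInputSymmetric V)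
    (Q : X → ℝ) (σ : Equiv.Perm X) : mutInf (Q ∘ σ) V = mutInf Q V :=
  let ⟨ρ, hρ⟩ := hV σ
  mutInf_comp_equiv Q σ ρ hρ

theorem IsInputSymmetric.mutInf_le_uniform [DecidableEq X] {V : X → Y → ℝ}
    (hV : IsInputSymmetric V) (hV₀ : ∀ x y, 0 ≤ V x y) {Q : X → ℝ} (hQ : IsProb Q) :
    mutInf Q V ≤ mutInf (fun _ => (Fintype.card X : ℝ)⁻¹) V := by
  have := hQ.nonempty
  set c : ℝ := (Fintype.card (Equiv.Perm X) : ℝ)⁻¹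
  have hc : ∑ _σ : Equiv.Perm X, c = 1 := by simp [c]
  have havg : ∑ σ : Equiv.Perm X, c • (Q ∘ σ) = fun _ => (Fintype.card X : ℝ)⁻¹ := by
    ext x
    have h := card_nsmul_sum_perm_apply Q x
    rw [nsmul_eq_mul, nsmul_eq_mul, hQ.2] at h
    simp only [Finset.sum_apply, Pi.smul_apply, Function.comp, smul_eq_mul, ← mul_sum, c]
    field_simp
    linarith
  calc mutInf Q V = ∑ σ : Equiv.Perm X, c • mutInf (Q ∘ σ) V := by
        simp only [hV.mutInf_comp_perm]
        rw [← sum_smul, hc, one_smul]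
    _ ≤ mutInf (∑ σ : Equiv.Perm X, c • (Q ∘ σ)) V :=
        (concaveOn_mutInf hV₀).le_map_sum (fun _ _ => by positivity) hc
          fun σ _ => fun x => hQ.1 (σ x)
    _ = _ := by rw [havg]

end MutualInformation

section ConditionalMutualInformation

variable {A B Y : Type*} [Fintype A] [Fintype B] [Fintype Y]

theorem isProb_condDist_s12 [Nonempty A] {P : A × B → ℝ} (hP : ∀ p, 0 ≤ P p) (b : B) :
    IsProb (condDist P b) := by
  refine ⟨fun a => ?_, ?_⟩
  · unfold condDist
    split_ifs
    · positivity
    · exact div_nonneg (hP _) (sum_nonneg fun _ _ => hP _)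
  · unfold condDist
    split_ifs with h
    · simp
    · rw [← sum_div, div_self h]

theorem sum_mul_condDist {P : A × B → ℝ} (hP : ∀ p, 0 ≤ P p) (a : A) (b : B) :
    (∑ a', P (a', b)) * condDist P b a = P (a, b) := by
  unfold condDist
  split_ifs with h
  · rw [h, zero_mul]
    exact ((sum_eq_zero_iff_of_nonneg fun a' _ => hP (a', b)).1 h a (mem_univ a)).symm
  · exact mul_div_cancel₀ _ h

theorem condMI_of_eq_mul {P : A × B → ℝ} {q : A → ℝ} {r : B → ℝ} (hq : ∑ a, q a = 1)
    (hP : ∀ a b, P (a, b) = q a * r b) (W : A → B → Y → ℝ) :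
    condMI P W = ∑ b, r b * mutInf q (fun a y => W a b y) := by
  have hmarg : ∀ b, ∑ a, P (a, b) = r b := fun b => by simp [hP, ← sum_mul, hq]
  refine sum_congr rfl fun b _ => ?_
  rw [hmarg]
  rcases eq_or_ne (r b) 0 with hr | hr
  · simp [hr]
  · congr 2
    ext a
    rw [condDist, hmarg, if_neg hr, hP, mul_div_cancel_right₀ _ hr]

theorem condMI_le_condMI_uniform_prod [DecidableEq A] {P : A × B → ℝ} (hP : IsProb P)
    {W : A → B → Y → ℝ} (hW : ∀ a b y, 0 ≤ W a b y)
    (hsym : ∀ b, IsInputSymmetric fun a y => W a b y) :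
    condMI P W ≤ condMI (fun p => (Fintype.card A : ℝ)⁻¹ * ∑ a, P (a, p.2)) W := by
  have := hP.nonempty_fst
  refine le_of_le_of_eq ?_
    (condMI_of_eq_mul (q := fun _ => (Fintype.card A : ℝ)⁻¹) (r := fun b => ∑ a, P (a, b))
      (by simp) (fun _ _ => rfl) W).symm
  unfold condMI
  gcongr with b
  · exact sum_nonneg fun a _ => hP.1 (a, b)
  · exact (hsym b).mutInf_le_uniform (fun a y => hW a b y) (isProb_condDist_s12 hP.1 b)

theorem condMI_le_condMI_prod_uniform {P : A × B → ℝ} (hP : IsProb P)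
    {W : A → B → Y → ℝ} (hW : ∀ a b y, 0 ≤ W a b y)
    (hrel : ∀ b b', ∃ ρ : Y ≃ Y, ∀ a y, W a b y = W a b' (ρ y)) :
    condMI P W ≤ condMI (fun p => (Fintype.card B : ℝ)⁻¹ * ∑ b, P (p.1, b)) W := by
  have := hP.nonempty_fst
  obtain ⟨b₀⟩ := hP.nonempty_snd
  set V : A → Y → ℝ := fun a y => W a b₀ y
  have hV : ∀ b Q, mutInf Q (fun a y => W a b y) = mutInf Q V := fun b Q =>
    let ⟨ρ, hρ⟩ := hrel b b₀
    mutInf_comp_equiv Q (Equiv.refl A) ρ hρ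
  have hweights : ∑ b, ∑ a, P (a, b) = 1 := by rw [sum_comm, ← Fintype.sum_prod_type, hP.2]
  calc condMI P W = ∑ b, (∑ a, P (a, b)) • mutInf (condDist P b) V := by simp [condMI, hV]
    _ ≤ mutInf (∑ b, (∑ a, P (a, b)) • condDist P b) V :=
        (concaveOn_mutInf fun a y => hW a b₀ y).le_map_sum
          (fun b _ => sum_nonneg fun a _ => hP.1 (a, b)) hweights
          fun b _ => fun a => (isProb_condDist_s12 hP.1 b).1 a
    _ = mutInf (fun a => ∑ b, P (a, b)) V := by
        congr 1
        ext a
        simp [Finset.sum_apply, sum_mul_condDist hP.1]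
    _ = condMI (fun p => (Fintype.card B : ℝ)⁻¹ * ∑ b, P (p.1, b)) W := by
        rw [condMI_of_eq_mul (q := fun a => ∑ b, P (a, b))
          (r := fun _ => (Fintype.card B : ℝ)⁻¹) ?_ fun _ _ => mul_comm _ _]
        · have hB : (Fintype.card B : ℝ) ≠ 0 :=
            Nat.cast_ne_zero.2 (Fintype.card_pos_iff.2 ⟨b₀⟩).ne'
          simp [hV, mul_inv_cancel_left₀ hB]
        · rw [← Fintype.sum_prod_type, hP.2]

end ConditionalMutualInformation

/-- Shannon's one-sided symmetry condition implies that for every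
joint input distribution `P`, the product `Unif(X1) ⊗ P_{X2}` dominates both
conditional mutual informations. -/
theorem shannon_one_sided_symmetry_dominance
    {X1 X2 Y1 Y2 : Type*} [Fintype X1] [Fintype X2] [Fintype Y1] [Fintype Y2]
    [DecidableEq X1]
    (W : X1 → X2 → Y1 × Y2 → ℝ) (hW : ∀ x1 x2, IsProb (W x1 x2))
    (hsym : ∀ x1' x1'' : X1, ∃ (π1 : Y1 ≃ Y1) (π2 : Y2 ≃ Y2),
      ∀ x1 x2 y1 y2,
        W x1 x2 (y1, y2) = W (Equiv.swap x1' x1'' x1) x2 (π1 y1, π2 y2))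
    (P : X1 × X2 → ℝ) (hP : IsProb P) :
    condMI P (fun x1 x2 y2 => ∑ y1, W x1 x2 (y1, y2)) ≤
      condMI (fun p => (Fintype.card X1 : ℝ)⁻¹ * ∑ a, P (a, p.2))
        (fun x1 x2 y2 => ∑ y1, W x1 x2 (y1, y2)) ∧
    condMI (fun p : X2 × X1 => P (p.2, p.1))
        (fun x2 x1 y1 => ∑ y2, W x1 x2 (y1, y2)) ≤
      condMI (fun p : X2 × X1 => (Fintype.card X1 : ℝ)⁻¹ * ∑ a, P (a, p.1))
        (fun x2 x1 y1 => ∑ y2, W x1 x2 (y1, y2)) := by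
  have hW₀ : ∀ x1 x2 y, 0 ≤ W x1 x2 y := fun x1 x2 => (hW x1 x2).1
  constructor
  · refine condMI_le_condMI_uniform_prod hP (fun _ _ _ => sum_nonneg fun _ _ => hW₀ _ _ _)
      fun x2 => IsInputSymmetric.of_swap fun a b => ?_
    obtain ⟨ρ₁, ρ₂, h⟩ := hsym a b
    exact ⟨ρ₂, fun x1 => sum_fst_eq_of_eq_prodMap ρ₁ ρ₂ (h x1 x2)⟩
  · refine condMI_le_condMI_prod_uniform (hP.comp_equiv (Equiv.prodComm X2 X1))
      (fun _ _ _ => sum_nonneg fun _ _ => hW₀ _ _ _) fun x1 x1' => ?_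
    obtain ⟨ρ₁, ρ₂, h⟩ := hsym x1 x1'
    refine ⟨ρ₁, fun x2 => ?_⟩
    simpa only [Equiv.swap_apply_left] using sum_snd_eq_of_eq_prodMap ρ₁ ρ₂ (h x1 x2)
end
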